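/- For all integers d ≥ 2 and n ≥ d^{d−1}, the edge metric dimension of the d-dimensional grid P_n^d equals d. -/

import Mathlib

open SimpleGraph

/-- `S` is a resolving set for `G`: any two distinct vertices are distinguished
by their graph distance to some landmark in `S`. -/
def IsResolvingSet {V : Type*} (G : SimpleGraph V) (S : Set V) : Prop :=
  ∀ u v : V, u ≠ v → ∃ w ∈ S, G.dist u w ≠ G.dist v w

/-- The metric dimension of `G`: the least size of a (finite) resolving set. -/
noncomputable def metricDim {V : Type*} (G : SimpleGraph V) : ℕ :=
  sInf {k | ∃ S : Finset V, IsResolvingSet G ↑S ∧ S.card = k}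

/-- Distance from an edge `e = {u,v}` to a vertex `w`: `min (d(u,w)) (d(v,w))`. -/
noncomputable def edgeDist {V : Type*} (G : SimpleGraph V) (e : Sym2 V) (w : V) : ℕ :=
  Sym2.lift ⟨fun u v => min (G.dist u w) (G.dist v w), fun u v => by simp [min_comm]⟩ e

/-- `S` is an edge resolving set for `G`: any two distinct edges are distinguished
by their distance to some landmark in `S`. -/
def IsEdgeResolvingSet {V : Type*} (G : SimpleGraph V) (S : Set V) : Prop :=
  ∀ e ∈ G.edgeSet, ∀ f ∈ G.edgeSet, e ≠ f → ∃ w ∈ S, edgeDist G e w ≠ edgeDist G f w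

/-- The edge metric dimension of `G`: the least size of a (finite) edge resolving set. -/
noncomputable def edgeMetricDim {V : Type*} (G : SimpleGraph V) : ℕ :=
  sInf {k | ∃ S : Finset V, IsEdgeResolvingSet G ↑S ∧ S.card = k}

/-- `G` contains `H` as a subgraph: there is an injective graph homomorphism `H → G`. -/
def Contains {V W : Type*} (G : SimpleGraph V) (H : SimpleGraph W) : Prop :=
  ∃ f : H →g G, Function.Injective f

/-- The graph `D_k` on `ℤ_{≥0}^k`: distinct points are adjacent iff they differ
by at most 1 in every coordinate. -/
def Dgraph (k : ℕ) : SimpleGraph (Fin k → ℕ) where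
  Adj x y := x ≠ y ∧ ∀ i, x i ≤ y i + 1 ∧ y i ≤ x i + 1
  symm := ⟨fun _x _y h => ⟨h.1.symm, fun i => ⟨(h.2 i).2, (h.2 i).1⟩⟩⟩
  loopless := ⟨fun _x h => h.1 rfl⟩

/-- The `d`-dimensional grid `P_n^d` on vertex set `{0,...,n-1}^d`: two vertices are
adjacent iff they agree in all but one coordinate, in which they differ by exactly 1. -/
def gridGraph (n d : ℕ) : SimpleGraph (Fin d → Fin n) where
  Adj x y := ∃ i, ((x i : ℕ) + 1 = (y i : ℕ) ∨ (y i : ℕ) + 1 = (x i : ℕ)) ∧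
    ∀ j, j ≠ i → x j = y j
  symm := by
    constructor
    rintro x y ⟨i, hi, hj⟩
    exact ⟨i, hi.symm, fun j h => (hj j h).symm⟩
  loopless := by
    constructor
    rintro x ⟨i, hi, _⟩
    rcases hi with h | h <;> omega

/-!
The graph distance of `P_n^d` is the `ℓ¹` distance of coordinate vectors. Write each edge as
`{x, x + e_c}`. Its distance to the origin is `∑ x`, and its distance to the corner `(n-1) e_i` is
`n - 1 + ∑ x - 2 x_i - [i = c]`. So the origin and the corners `(n-1) e_i` with `i ≠ i₀` recover
`∑ x`, then `x_i` and `[i = c]` for `i ≠ i₀`, hence `c` and `x`: `edim ≤ d`.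

Conversely, the two endpoints of an edge have different distances to any vertex, both at most the
diameter `d (n-1)`, so every edge has distance `< d (n-1)` to every landmark and `k` landmarks
separate at most `(d (n-1))^k` edges. There are `d (n-1) n^(d-1)` edges, and for `n ≥ d^(d-1)` this
exceeds `(d (n-1))^(d-1)`.
-/

theorem IsEdgeResolvingSet.card_edgeSet_le_pow {V : Type*} {G : SimpleGraph V} {S : Finset V}
    (hS : IsEdgeResolvingSet G ↑S) {D : ℕ} (hD : ∀ e ∈ G.edgeSet, ∀ w ∈ S, edgeDist G e w < D) :
    Nat.card G.edgeSet ≤ D ^ S.card := by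
  let F : G.edgeSet → (S → Fin D) := fun e w => ⟨edgeDist G e w, hD e e.2 w w.2⟩
  have hF : Function.Injective F := by
    intro e f hef
    by_contra hne
    obtain ⟨w, hw, hwne⟩ := hS e e.2 f f.2 (Subtype.coe_ne_coe.mpr hne)
    exact hwne (congrArg Fin.val (congrFun hef ⟨w, hw⟩))
  simpa [Nat.card_fun] using Nat.card_le_card_of_injective F hF

lemma edgeDist_mk {V : Type*} (G : SimpleGraph V) (u v w : V) :
    edgeDist G s(u, v) w = min (G.dist u w) (G.dist v w) := rfl

lemma Fintype.sum_add_eq_sum_add_of_forall_ne {ι M : Type*} [Fintype ι] [DecidableEq ι]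
    [AddCommMonoid M] {f g : ι → M} (i : ι) (h : ∀ j ≠ i, f j = g j) :
    ∑ j, f j + g i = ∑ j, g j + f i := by
  rw [← Finset.add_sum_erase _ f (Finset.mem_univ i),
    ← Finset.add_sum_erase _ g (Finset.mem_univ i),
    Finset.sum_congr rfl fun j hj => h j (Finset.ne_of_mem_erase hj)]
  abel

lemma mul_sub_one_pow_pred_lt {d n : ℕ} (hd : 2 ≤ d) (h : d ^ (d - 1) ≤ n) :
    (d * (n - 1)) ^ (d - 1) < d * ((n - 1) * n ^ (d - 1)) := by
  obtain ⟨m, hm⟩ : ∃ m, d - 1 = m + 1 := ⟨d - 2, by omega⟩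
  rw [hm] at h ⊢
  have hn : 2 ≤ n := le_trans (Nat.one_lt_pow (by omega) (by omega)) h
  calc (d * (n - 1)) ^ (m + 1) = d ^ (m + 1) * ((n - 1) * (n - 1) ^ m) := by ring
    _ ≤ n * ((n - 1) * n ^ m) := by gcongr; omega
    _ = 1 * ((n - 1) * n ^ (m + 1)) := by ring
    _ < d * ((n - 1) * n ^ (m + 1)) := by
        have : 0 < (n - 1) * n ^ (m + 1) := Nat.mul_pos (by omega) (by positivity)
        gcongr
        omega

namespace GridGraph

open Finset Function

variable {n d : ℕ}

def l1Dist (x y : Fin d → Fin n) : ℕ := ∑ j, Nat.dist (x j) (y j)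

lemma l1Dist_self (x : Fin d → Fin n) : l1Dist x x = 0 := by simp [l1Dist]

lemma eq_of_l1Dist_eq_zero {x y : Fin d → Fin n} (h : l1Dist x y = 0) : x = y :=
  funext fun j => Fin.ext (Nat.eq_of_dist_eq_zero (sum_eq_zero_iff.mp h j (mem_univ j)))

lemma l1Dist_triangle (x y z : Fin d → Fin n) : l1Dist x z ≤ l1Dist x y + l1Dist y z := by
  rw [l1Dist, l1Dist, l1Dist, ← sum_add_distrib]
  exact sum_le_sum fun j _ => Nat.dist.triangle_inequality _ _ _

lemma l1Dist_le (x y : Fin d → Fin n) : l1Dist x y ≤ d * (n - 1) :=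
  calc l1Dist x y ≤ ∑ _j : Fin d, (n - 1) := sum_le_sum fun j _ => by
        have := (x j).isLt; have := (y j).isLt; unfold Nat.dist; omega
    _ = d * (n - 1) := by simp

lemma l1Dist_add_dist_eq {x y : Fin d → Fin n} {i : Fin d} (hxy : ∀ j ≠ i, x j = y j)
    (w : Fin d → Fin n) :
    l1Dist x w + Nat.dist (y i) (w i) = l1Dist y w + Nat.dist (x i) (w i) :=
  Fintype.sum_add_eq_sum_add_of_forall_ne (f := fun j => Nat.dist (x j) (w j))
    (g := fun j => Nat.dist (y j) (w j)) i fun j hj => by rw [hxy j hj]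

lemma l1Dist_of_adj {x y : Fin d → Fin n} (h : (gridGraph n d).Adj x y) : l1Dist x y = 1 := by
  obtain ⟨i, hi, hxy⟩ := h
  have := l1Dist_add_dist_eq hxy y
  rw [l1Dist_self, Nat.dist_self] at this
  unfold Nat.dist at this
  omega

lemma l1Dist_le_length {x y : Fin d → Fin n} (p : (gridGraph n d).Walk x y) :
    l1Dist x y ≤ p.length := by
  induction p with
  | nil => simp [l1Dist_self]
  | @cons u v w h p ih =>
    have := l1Dist_triangle u v w
    rw [l1Dist_of_adj h] at this
    rw [Walk.length_cons]
    omega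

lemma exists_adj_l1Dist_add_one_eq {x y : Fin d → Fin n} (hxy : x ≠ y) :
    ∃ x', (gridGraph n d).Adj x x' ∧ l1Dist x' y + 1 = l1Dist x y := by
  obtain ⟨j, hj⟩ := Function.ne_iff.mp hxy
  have hj' : (x j : ℕ) ≠ y j := Fin.val_ne_of_ne hj
  have := (x j).isLt
  have := (y j).isLt
  obtain ⟨m, hm, hdist⟩ : ∃ m : Fin n, ((x j : ℕ) + 1 = m ∨ (m : ℕ) + 1 = x j) ∧
      Nat.dist m (y j) + 1 = Nat.dist (x j) (y j) := by
    rcases Nat.lt_or_gt_of_ne hj' with hlt | hgt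
    · exact ⟨⟨x j + 1, by omega⟩, Or.inl rfl, by unfold Nat.dist; dsimp only; omega⟩
    · exact ⟨⟨x j - 1, by omega⟩, Or.inr (by dsimp only; omega),
        by unfold Nat.dist; dsimp only; omega⟩
  have hoff : ∀ k ≠ j, update x j m k = x k := fun k hk => update_of_ne hk _ _
  refine ⟨update x j m, ⟨j, by simpa using hm, fun k hk => (hoff k hk).symm⟩, ?_⟩
  have := l1Dist_add_dist_eq hoff y
  rw [update_self] at this
  omega

lemma exists_walk_length_eq_l1Dist (x y : Fin d → Fin n) :
    ∃ p : (gridGraph n d).Walk x y, p.length = l1Dist x y := by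
  induction h : l1Dist x y generalizing x with
  | zero =>
    obtain rfl := eq_of_l1Dist_eq_zero h
    exact ⟨Walk.nil, rfl⟩
  | succ N ih =>
    obtain ⟨x', hadj, hx'⟩ := exists_adj_l1Dist_add_one_eq (x := x) (y := y) (by
      rintro rfl
      simp [l1Dist_self] at h)
    obtain ⟨p, hp⟩ := ih x' (by omega)
    exact ⟨Walk.cons hadj p, by simp [hp]⟩

theorem dist_eq_l1Dist (x y : Fin d → Fin n) : (gridGraph n d).dist x y = l1Dist x y := by
  obtain ⟨p, hp⟩ := exists_walk_length_eq_l1Dist x y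
  obtain ⟨q, hq⟩ := p.reachable.exists_walk_length_eq_dist
  exact le_antisymm (hp ▸ dist_le p) (hq ▸ l1Dist_le_length q)

lemma dist_ne_dist_of_adj {x y : Fin d → Fin n} (h : (gridGraph n d).Adj x y)
    (w : Fin d → Fin n) : (gridGraph n d).dist x w ≠ (gridGraph n d).dist y w := by
  obtain ⟨i, hi, hxy⟩ := h
  have := l1Dist_add_dist_eq hxy w
  rw [dist_eq_l1Dist, dist_eq_l1Dist]
  unfold Nat.dist at this
  omega

lemma edgeDist_lt {e : Sym2 (Fin d → Fin n)} (he : e ∈ (gridGraph n d).edgeSet)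
    (w : Fin d → Fin n) : edgeDist (gridGraph n d) e w < d * (n - 1) := by
  induction e using Sym2.ind with
  | _ x y =>
    have hne := dist_ne_dist_of_adj (x := x) (y := y) he w
    rw [edgeDist_mk, dist_eq_l1Dist, dist_eq_l1Dist] at *
    have := l1Dist_le x w
    have := l1Dist_le y w
    omega

/-- Truncated at the boundary to make it total: `s(x, inc x c)` is an edge only when
`x c + 1 < n`. -/
def inc (x : Fin d → Fin n) (c : Fin d) : Fin d → Fin n :=
  update x c ⟨min (x c + 1) (n - 1), by have := (x c).isLt; omega⟩

lemma inc_apply_of_ne (x : Fin d → Fin n) {c j : Fin d} (hj : j ≠ c) : inc x c j = x j :=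
  update_of_ne hj _ _

lemma inc_apply {x : Fin d → Fin n} {c : Fin d} (h : (x c : ℕ) + 1 < n) (j : Fin d) :
    (inc x c j : ℕ) = x j + if j = c then 1 else 0 := by
  by_cases hj : j = c
  · subst hj
    simp [inc]
    omega
  · simp [inc_apply_of_ne x hj, hj]

lemma adj_inc {x : Fin d → Fin n} {c : Fin d} (h : (x c : ℕ) + 1 < n) :
    (gridGraph n d).Adj x (inc x c) :=
  ⟨c, Or.inl (by simp [inc_apply h]), fun _ hj => (inc_apply_of_ne x hj).symm⟩

lemma sum_inc {x : Fin d → Fin n} {c : Fin d} (h : (x c : ℕ) + 1 < n) :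
    ∑ j, (inc x c j : ℕ) = ∑ j, (x j : ℕ) + 1 := by
  have := Fintype.sum_add_eq_sum_add_of_forall_ne (f := fun j => (inc x c j : ℕ))
    (g := fun j => (x j : ℕ)) c fun j hj => by rw [inc_apply_of_ne x hj]
  have hc : (inc x c c : ℕ) = x c + 1 := by simp [inc_apply h]
  omega

lemma exists_eq_inc {e : Sym2 (Fin d → Fin n)} (he : e ∈ (gridGraph n d).edgeSet) :
    ∃ x c, (x c : ℕ) + 1 < n ∧ e = s(x, inc x c) := by
  have eq_inc : ∀ {x y : Fin d → Fin n} {c : Fin d}, (x c : ℕ) + 1 = y c →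
      (∀ j ≠ c, x j = y j) → y = inc x c := by
    intro x y c hc hxy
    have h : (x c : ℕ) + 1 < n := hc ▸ (y c).isLt
    funext j
    by_cases hj : j = c
    · subst hj
      exact Fin.ext (by simp [inc_apply h, hc])
    · rw [inc_apply_of_ne x hj, hxy j hj]
  induction e using Sym2.ind with
  | _ x y =>
    obtain ⟨c, hxy | hyx, hoff⟩ := he
    · exact ⟨x, c, hxy ▸ (y c).isLt, by rw [← eq_inc hxy hoff]⟩
    · refine ⟨y, c, hyx ▸ (x c).isLt, ?_⟩
      rw [← eq_inc hyx fun j hj => (hoff j hj).symm, Sym2.eq_swap]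

lemma eq_of_mk_inc_eq {x x' : Fin d → Fin n} {c c' : Fin d} (h : (x c : ℕ) + 1 < n)
    (h' : (x' c' : ℕ) + 1 < n) (he : s(x, inc x c) = s(x', inc x' c')) : x = x' ∧ c = c' := by
  rcases Sym2.eq_iff.mp he with ⟨rfl, hinc⟩ | ⟨hx, hx'⟩
  · refine ⟨rfl, by_contra fun hcc => ?_⟩
    have := congrArg (fun y => (y c : ℕ)) hinc
    simp only [inc_apply h, inc_apply h', if_pos, if_neg hcc] at this
    omega
  · have hsum := sum_inc h
    have hsum' := sum_inc h'
    rw [hx'] at hsum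
    rw [← hx] at hsum'
    omega

lemma card_subtype_apply_add_one_lt (c : Fin d) :
    Nat.card {x : Fin d → Fin n // (x c : ℕ) + 1 < n} = (n - 1) * n ^ (d - 1) := by
  have hfst : Nat.card {a : Fin n // (a : ℕ) + 1 < n} = n - 1 := by
    rw [Nat.card_eq_fintype_card, Fintype.card_subtype]
    simp_rw [← Nat.lt_sub_iff_add_lt, Fin.card_filter_val_lt]
    omega
  let e : {x : Fin d → Fin n // (x c : ℕ) + 1 < n} ≃
      {q : Fin n × ({j // j ≠ c} → Fin n) // (q.1 : ℕ) + 1 < n} :=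
    (Equiv.funSplitAt c (Fin n)).subtypeEquiv fun _ => Iff.rfl
  rw [Nat.card_congr (e.trans
    (Equiv.prodSubtypeFstEquivSubtypeProd (p := fun a : Fin n => (a : ℕ) + 1 < n))),
    Nat.card_prod, Nat.card_fun, hfst]
  simp

lemma le_card_edgeSet : d * ((n - 1) * n ^ (d - 1)) ≤ Nat.card (gridGraph n d).edgeSet := by
  let F : (Σ c : Fin d, {x : Fin d → Fin n // (x c : ℕ) + 1 < n}) → (gridGraph n d).edgeSet :=
    fun p => ⟨s(p.2.1, inc p.2.1 p.1), adj_inc p.2.2⟩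
  have hF : Injective F := by
    rintro ⟨c, x, hx⟩ ⟨c', x', hx'⟩ he
    obtain ⟨rfl, rfl⟩ := eq_of_mk_inc_eq hx hx' (congrArg Subtype.val he)
    rfl
  have := Nat.card_le_card_of_injective F hF
  rwa [Nat.card_sigma, sum_congr rfl fun c _ => card_subtype_apply_add_one_lt c, sum_const,
    card_univ, Fintype.card_fin, smul_eq_mul] at this

theorem le_card_of_isEdgeResolvingSet (hd : 2 ≤ d) (h : d ^ (d - 1) ≤ n)
    {S : Finset (Fin d → Fin n)} (hS : IsEdgeResolvingSet (gridGraph n d) ↑S) : d ≤ S.card := by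
  by_contra! hlt
  have hn : 2 ≤ n := le_trans (Nat.one_lt_pow (by omega) (by omega)) h
  have hupper := hS.card_edgeSet_le_pow fun e he w _ => edgeDist_lt he w
  have hpow : (d * (n - 1)) ^ S.card ≤ (d * (n - 1)) ^ (d - 1) :=
    Nat.pow_le_pow_right (Nat.mul_pos (by omega) (by omega)) (by omega)
  have := le_card_edgeSet (n := n) (d := d)
  have := mul_sub_one_pow_pred_lt hd h
  omega

section Landmarks

variable [NeZero n]

def corner (i : Fin d) : Fin d → Fin n := update 0 i (Fin.rev 0)

def landmarks (i₀ : Fin d) : Finset (Fin d → Fin n) := insert 0 ((univ.erase i₀).image corner)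

lemma zero_mem_landmarks (i₀ : Fin d) : (0 : Fin d → Fin n) ∈ landmarks i₀ := mem_insert_self _ _

lemma corner_mem_landmarks {i₀ i : Fin d} (hi : i ≠ i₀) : corner (n := n) i ∈ landmarks i₀ :=
  mem_insert_of_mem (mem_image_of_mem _ (mem_erase.mpr ⟨hi, mem_univ i⟩))

lemma l1Dist_zero_right (x : Fin d → Fin n) : l1Dist x 0 = ∑ j, (x j : ℕ) := by
  simp [l1Dist, Nat.dist_zero_right]

lemma l1Dist_corner_add (x : Fin d → Fin n) (i : Fin d) :
    l1Dist x (corner i) + 2 * x i = n - 1 + ∑ j, (x j : ℕ) := by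
  have hsplit := Fintype.sum_add_eq_sum_add_of_forall_ne (f := fun j => Nat.dist (x j) (corner i j))
    (g := fun j => Nat.dist (x j) ((0 : Fin d → Fin n) j)) i
    fun j hj => by unfold corner; rw [update_of_ne hj]
  change l1Dist x (corner i) + _ = l1Dist x 0 + _ at hsplit
  have hcorner : (corner (n := n) i i : ℕ) = n - 1 := by simp [corner]
  simp only [hcorner, Pi.zero_apply, Fin.val_zero, Nat.dist_zero_right, l1Dist_zero_right] at hsplit
  have := (x i).isLt
  unfold Nat.dist at hsplit
  omega

lemma edgeDist_inc_zero {x : Fin d → Fin n} {c : Fin d} (h : (x c : ℕ) + 1 < n) :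
    edgeDist (gridGraph n d) s(x, inc x c) 0 = ∑ j, (x j : ℕ) := by
  rw [edgeDist_mk, dist_eq_l1Dist, dist_eq_l1Dist, l1Dist_zero_right, l1Dist_zero_right, sum_inc h]
  omega

lemma edgeDist_inc_corner_add {x : Fin d → Fin n} {c : Fin d} (h : (x c : ℕ) + 1 < n)
    (i : Fin d) :
    edgeDist (gridGraph n d) s(x, inc x c) (corner i) + 2 * x i + (if i = c then 1 else 0) =
      n - 1 + ∑ j, (x j : ℕ) := by
  have hx := l1Dist_corner_add x i
  have hinc := l1Dist_corner_add (inc x c) i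
  rw [sum_inc h, inc_apply h] at hinc
  rw [edgeDist_mk, dist_eq_l1Dist, dist_eq_l1Dist]
  split_ifs at hinc ⊢ <;> omega

theorem isEdgeResolvingSet_landmarks (i₀ : Fin d) :
    IsEdgeResolvingSet (gridGraph n d) ↑(landmarks (n := n) i₀) := by
  intro e he f hf hne
  by_contra! hS
  obtain ⟨x, c, hx, rfl⟩ := exists_eq_inc he
  obtain ⟨x', c', hx', rfl⟩ := exists_eq_inc hf
  have hsum : ∑ j, (x j : ℕ) = ∑ j, (x' j : ℕ) := by
    simpa [edgeDist_inc_zero hx, edgeDist_inc_zero hx'] using hS 0 (zero_mem_landmarks i₀)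
  have hcoord : ∀ i ≠ i₀, x i = x' i ∧ (i = c ↔ i = c') := by
    intro i hi
    have h1 := edgeDist_inc_corner_add hx i
    have h2 := edgeDist_inc_corner_add hx' i
    have h3 := hS (corner i) (corner_mem_landmarks hi)
    have key : 2 * (x i : ℕ) + (if i = c then 1 else 0) =
        2 * x' i + (if i = c' then 1 else 0) := by
      omega
    split_ifs at key <;> omega
  obtain rfl : c = c' := by
    by_cases hc : c = i₀
    · by_contra hcc
      exact hcc ((hcoord c' (hc ▸ Ne.symm hcc)).2.mpr rfl).symm
    · exact (hcoord c hc).2.mp rfl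
  obtain rfl : x = x' := by
    funext j
    by_cases hj : j = i₀
    · subst hj
      have := Fintype.sum_add_eq_sum_add_of_forall_ne (f := fun j => (x j : ℕ))
        (g := fun j => (x' j : ℕ)) j
        fun k hk => congrArg Fin.val (hcoord k hk).1
      exact Fin.ext (by omega)
    · exact (hcoord j hj).1
  exact hne rfl

lemma card_landmarks_le (i₀ : Fin d) : (landmarks (n := n) i₀).card ≤ d :=
  calc (landmarks (n := n) i₀).card ≤ ((univ.erase i₀).image (corner (n := n))).card + 1 :=
        card_insert_le _ _
    _ ≤ (univ.erase i₀).card + 1 := by gcongr; exact card_image_le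
    _ = d := by
      rw [card_erase_of_mem (mem_univ _), card_univ, Fintype.card_fin]
      have := i₀.pos
      omega

end Landmarks

end GridGraph

/-- for `d ≥ 2` and `n ≥ d^(d-1)`, the edge metric dimension of the
grid `P_n^d` equals `d`. -/
theorem statement19 (d n : ℕ) (hd : 2 ≤ d) (h : d ^ (d - 1) ≤ n) :
    edgeMetricDim (gridGraph n d) = d := by
  have : NeZero n := NeZero.of_pos (lt_of_lt_of_le (Nat.one_le_pow _ _ (by omega)) h)
  let i₀ : Fin d := ⟨0, by omega⟩
  have hS := GridGraph.isEdgeResolvingSet_landmarks (n := n) i₀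
  have hlower := fun {S} => GridGraph.le_card_of_isEdgeResolvingSet (S := S) hd h
  have hcard := le_antisymm (GridGraph.card_landmarks_le i₀) (hlower hS)
  refine le_antisymm (Nat.sInf_le ⟨_, hS, hcard⟩) (le_csInf ⟨d, _, hS, hcard⟩ ?_)
  rintro k ⟨T, hT, rfl⟩
  exact hlower hT
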